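/- arXiv:2201.07193 — 7 statements merged into one kernel-verified Lean document; each statement's English description precedes it below -/
import Mathlib

section
/- Let q be a prime power, n ≥ 1, and let i, j be integers with 0 ≤ i, j ≤ n−1. Set ℓ = gcd(i, j, n) and let c ∈ F_{q^n} satisfy c^{(q^n−1)/(q^ℓ−1)} ≠ 1. Then: (1) for every nonzero y ∈ F_{q^n}, the F_q-linear map F_{q^n} → F_{q^n} given by x ↦ x·y − c·x^{q^i}·y^{q^j} is bijective; and (2) the set C_{c,α,β} = { x ↦ x·y − c·x^{q^i}·y^{q^j} : y ∈ F_{q^n} } is an F_q-linear subspace of the F_q-endomorphisms of F_{q^n}. -/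
/-- Let `E/F` be an extension of finite fields with `|F| = q` and `[E : F] = n`. For
`0 ≤ i, j ≤ n−1`, `ℓ = gcd(i, j, n)` and `c ∈ E` with `c^((q^n−1)/(q^ℓ−1)) ≠ 1`:
(1) for every nonzero `y ∈ E`, the map `x ↦ x·y − c·x^{q^i}·y^{q^j}` is bijective;
(2) the set of all such maps (for `y ∈ E`) is an `F`-linear subspace of the
`F`-endomorphisms of `E`. -/
theorem stmt3 (q n i j : ℕ) (F E : Type) [Field F] [Fintype F] [Field E] [Fintype E]
    [Algebra F E] (hq : Fintype.card F = q) (hn : Module.finrank F E = n) (hn1 : 1 ≤ n)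
    (hi : i ≤ n - 1) (hj : j ≤ n - 1) (c : E)
    (hc : c ^ ((q ^ n - 1) / (q ^ Nat.gcd i (Nat.gcd j n) - 1)) ≠ 1) :
    (∀ y : E, y ≠ 0 →
        Function.Bijective (fun x : E => x * y - c * x ^ q ^ i * y ^ q ^ j)) ∧
      (∃ C : Submodule F (E → E),
        (C : Set (E → E)) =
          {f : E → E | ∃ y : E, f = fun x => x * y - c * x ^ q ^ i * y ^ q ^ j}) ∧
      (∀ y : E, IsLinearMap F (fun x : E => x * y - c * x ^ q ^ i * y ^ q ^ j)) := by
  classical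
  -- characteristic setup
  set p := ringChar F with hpdef
  haveI hpF : CharP F p := ringChar.charP F
  have hp : p.Prime := CharP.char_is_prime F p
  haveI := Fact.mk hp
  haveI hpE : CharP E p := charP_of_injective_algebraMap (algebraMap F E).injective p
  obtain ⟨m, hm⟩ := FiniteField.card F p
  have hqp : q = p ^ (m : ℕ) := by rw [← hq, hm.2]
  have hqk : ∀ k : ℕ, q ^ k = p ^ ((m : ℕ) * k) := by
    intro k; rw [hqp, ← pow_mul]
  -- Frobenius powers are additive and F-linear
  have hadd : ∀ (k : ℕ) (a b : E), (a + b) ^ q ^ k = a ^ q ^ k + b ^ q ^ k := by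
    intro k a b; rw [hqk k]; exact add_pow_char_pow a b p _
  have hsub : ∀ (k : ℕ) (a b : E), (a - b) ^ q ^ k = a ^ q ^ k - b ^ q ^ k := by
    intro k a b; rw [hqk k]; exact sub_pow_char_pow a b _
  have hsmul : ∀ (k : ℕ) (a : F) (x : E), (a • x) ^ q ^ k = a • x ^ q ^ k := by
    intro k a x
    rw [Algebra.smul_def, Algebra.smul_def, mul_pow, ← map_pow]
    congr 2
    have := FiniteField.pow_card_pow (K := F) k a
    rwa [hq] at this
  -- cardinality of E
  have hE : Fintype.card E = q ^ n := by
    rw [← hq, ← hn]; exact Module.card_eq_pow_finrank (K := F)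
  set ℓ := Nat.gcd i (Nat.gcd j n) with hℓ
  set N := (q ^ n - 1) / (q ^ ℓ - 1) with hN
  have hq1 : 0 < q := by rw [← hq]; exact Fintype.card_pos
  have hdvd : ∀ k : ℕ, ℓ ∣ k → q ^ ℓ - 1 ∣ q ^ k - 1 := by
    intro k hk
    have h1 : (q ^ ℓ) ^ (k / ℓ) = q ^ k := by
      rw [← pow_mul, Nat.mul_div_cancel' hk]
    have h2 := Nat.sub_dvd_pow_sub_pow (q ^ ℓ) 1 (k / ℓ)
    rwa [one_pow, h1] at h2
  have hdn : q ^ ℓ - 1 ∣ q ^ n - 1 :=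
    hdvd n ((Nat.gcd_dvd_right i (Nat.gcd j n)).trans (Nat.gcd_dvd_right j n))
  -- key power-one lemma
  have hone : ∀ (k : ℕ), ℓ ∣ k → ∀ z : E, z ≠ 0 → z ^ ((q ^ k - 1) * N) = 1 := by
    intro k hk z hz
    have hd := hdvd k hk
    have hzn : z ^ (q ^ n - 1) = 1 := by
      have := FiniteField.pow_card_sub_one_eq_one z hz
      rwa [hE] at this
    have hq2 : 2 ≤ q := by rw [← hq]; exact Fintype.one_lt_card
    have hℓpos : 0 < ℓ := Nat.pos_of_dvd_of_pos
      ((Nat.gcd_dvd_right i (Nat.gcd j n)).trans (Nat.gcd_dvd_right j n)) hn1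
    have hd0 : 0 < q ^ ℓ - 1 := by
      have h2q : q ≤ q ^ ℓ := Nat.le_self_pow hℓpos.ne' q
      omega
    obtain ⟨t, ht⟩ := hd
    obtain ⟨s, hs⟩ := hdn
    have hexp : (q ^ k - 1) * N = (q ^ n - 1) * ((q ^ k - 1) / (q ^ ℓ - 1)) := by
      rw [hN, ht, hs, Nat.mul_div_cancel_left _ hd0, Nat.mul_div_cancel_left _ hd0]
      ring
    rw [hexp, pow_mul, hzn, one_pow]
  -- key kernel lemma
  have key : ∀ y : E, y ≠ 0 → ∀ x : E,
      x * y - c * x ^ q ^ i * y ^ q ^ j = 0 → x = 0 := by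
    intro y hy x hx0
    by_contra hx
    have heq : x * y = c * x ^ q ^ i * y ^ q ^ j := by
      rw [← sub_eq_zero]; exact hx0
    have hi' : ℓ ∣ i := Nat.gcd_dvd_left i (Nat.gcd j n)
    have hj' : ℓ ∣ j := (Nat.gcd_dvd_right i (Nat.gcd j n)).trans (Nat.gcd_dvd_left j n)
    have hxi : x ^ (q ^ i * N) = x ^ N := by
      have : q ^ i * N = (q ^ i - 1) * N + N := by
        rw [← Nat.succ_pred_eq_of_pos (pow_pos hq1 i), Nat.succ_mul]
        simp [Nat.pred_eq_sub_one]
      rw [this, pow_add, hone i hi' x hx, one_mul]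
    have hyj : y ^ (q ^ j * N) = y ^ N := by
      have : q ^ j * N = (q ^ j - 1) * N + N := by
        rw [← Nat.succ_pred_eq_of_pos (pow_pos hq1 j), Nat.succ_mul]
        simp [Nat.pred_eq_sub_one]
      rw [this, pow_add, hone j hj' y hy, one_mul]
    have h2 := congrArg (· ^ N) heq
    simp only [mul_pow, ← pow_mul] at h2
    rw [hxi, hyj] at h2
    have hne : x ^ N * y ^ N ≠ 0 := mul_ne_zero (pow_ne_zero _ hx) (pow_ne_zero _ hy)
    apply hc
    apply mul_right_cancel₀ hne
    rw [one_mul, ← mul_assoc]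
    exact h2.symm
  -- the linear map y ↦ f_y
  let g : E →ₗ[F] (E → E) :=
    { toFun := fun y => fun x => x * y - c * x ^ q ^ i * y ^ q ^ j
      map_add' := by
        intro y z; funext x
        simp only [Pi.add_apply, hadd j]
        ring
      map_smul' := by
        intro a y; funext x
        simp only [Pi.smul_apply, RingHom.id_apply]
        rw [hsmul j]
        simp only [Algebra.smul_def]
        ring }
  refine ⟨?_, ⟨LinearMap.range g, ?_⟩, ?_⟩
  · -- bijectivity
    intro y hy
    rw [← Finite.injective_iff_bijective]
    intro a b hab
    have hab' : a * y - c * a ^ q ^ i * y ^ q ^ j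
        = b * y - c * b ^ q ^ i * y ^ q ^ j := hab
    have h0 : (a - b) * y - c * (a - b) ^ q ^ i * y ^ q ^ j = 0 := by
      rw [hsub i]
      linear_combination hab'
    have := key y hy (a - b) h0
    exact sub_eq_zero.mp this
  · -- the set is the range of g
    ext f
    simp only [SetLike.mem_coe, LinearMap.mem_range, Set.mem_setOf_eq]
    exact exists_congr fun y => eq_comm
  · -- linearity in x
    intro y
    constructor
    · intro a b
      simp only [hadd i]
      ring
    · intro a x
      rw [hsmul i]
      simp only [Algebra.smul_def]
      ring
end

section
/- Let q be a prime power, n ≥ 1, and let j be an integer with 0 ≤ j ≤ n−1. Set ℓ = gcd(j, n) and let c ∈ F_{q^n} satisfy c^{(q^n−1)/(q^ℓ−1)} ≠ 1. Then the F_q-linear map g : F_{q^n} → F_{q^n} defined by g(y) = y − c·y^{q^j} is bijective. -/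
/-!
A nonzero `w` with `w = c * w ^ q ^ j` forces `c ^ N = 1` for `N = (q ^ n - 1) / (q ^ ℓ - 1)`:
the norm `w ^ N` lies in `𝔽_{q^ℓ}`, hence is fixed by `x ↦ x ^ q ^ j` because `ℓ ∣ j`, and raising
`w = c * w ^ q ^ j` to the `N`-th power gives `w ^ N = c ^ N * w ^ N`. So the additive map
`y ↦ y - c * y ^ q ^ j` has trivial kernel, and is bijective since `𝔽_{q^n}` is finite.
-/

theorem FiniteField.sub_pow_card_pow (F : Type*) {E : Type*} [Field F] [Fintype F] [CommRing E]
    [Algebra F E] (x y : E) (j : ℕ) :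
    (x - y) ^ Fintype.card F ^ j = x ^ Fintype.card F ^ j - y ^ Fintype.card F ^ j := by
  induction j with
  | zero => simp
  | succ j ih =>
    simp only [pow_succ, pow_mul, ih]
    exact map_sub (FiniteField.frobeniusAlgHom F E) _ _

theorem pow_eq_one_of_eq_mul_pow {G : Type*} [CommGroupWithZero G] {w c : G} {Q N : ℕ}
    (hw : w ≠ 0) (hfix : (w ^ Q) ^ N = w ^ N) (h : w = c * w ^ Q) : c ^ N = 1 := by
  refine mul_right_cancel₀ (pow_ne_zero N hw) ?_
  calc c ^ N * w ^ N = (c * w ^ Q) ^ N := by rw [mul_pow, hfix]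
    _ = 1 * w ^ N := by rw [← h, one_mul]

theorem pow_pow_eq_pow_of_pow_eq_one {M : Type*} [Monoid M] {x : M} {e Q N : ℕ}
    (he : x ^ e = 1) (hdvd : e ∣ N * (Q - 1)) (hQ : 1 ≤ Q) : (x ^ Q) ^ N = x ^ N := by
  obtain ⟨k, hk⟩ := hdvd
  calc (x ^ Q) ^ N = x ^ N * x ^ (N * (Q - 1)) := by
        rw [← pow_mul, ← pow_add]; congr 1
        nth_rw 1 [← Nat.sub_add_cancel hQ]; ring
    _ = x ^ N := by rw [hk, pow_mul, he, one_pow, mul_one]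

theorem Nat.pow_sub_one_dvd_div_mul_pow_sub_one (q n j : ℕ) :
    q ^ n - 1 ∣ (q ^ n - 1) / (q ^ Nat.gcd j n - 1) * (q ^ j - 1) := by
  obtain ⟨k, hk⟩ := Nat.pow_sub_one_dvd_pow_sub_one q (Nat.gcd_dvd_left j n)
  refine ⟨k, ?_⟩
  rw [hk, ← mul_assoc,
    Nat.div_mul_cancel (Nat.pow_sub_one_dvd_pow_sub_one q (Nat.gcd_dvd_right j n))]

theorem stmt4_general (q n j : ℕ) (F E : Type) [Field F] [Fintype F] [Field E] [Fintype E]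
    [Algebra F E] (hq : Fintype.card F = q) (hn : Module.finrank F E = n)
    (c : E)
    (hc : c ^ ((q ^ n - 1) / (q ^ Nat.gcd j n - 1)) ≠ 1) :
    Function.Bijective (fun y : E => y - c * y ^ q ^ j) := by
  rw [← Finite.injective_iff_bijective]
  intro y z hyz
  by_contra hne
  have hw : y - z ≠ 0 := sub_ne_zero.mpr hne
  have hker : y - z = c * (y - z) ^ q ^ j := by
    rw [← hq, FiniteField.sub_pow_card_pow, hq]
    linear_combination hyz
  have hunit : (y - z) ^ (q ^ n - 1) = 1 := by
    rw [← hq, ← hn, ← Module.card_eq_pow_finrank]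
    exact FiniteField.pow_card_sub_one_eq_one _ hw
  have hqj : 1 ≤ q ^ j := Nat.one_le_pow _ _ (hq ▸ Fintype.card_pos)
  exact hc (pow_eq_one_of_eq_mul_pow hw (pow_pow_eq_pow_of_pow_eq_one hunit
    (Nat.pow_sub_one_dvd_div_mul_pow_sub_one q n j) hqj) hker)

/-- Let `E/F` be an extension of finite fields with `|F| = q` and `[E : F] = n`. For
`0 ≤ j ≤ n−1`, `ℓ = gcd(j, n)` and `c ∈ E` with `c^((q^n−1)/(q^ℓ−1)) ≠ 1`, the
`F`-linear map `y ↦ y − c·y^{q^j}` is bijective. -/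
theorem stmt4 (q n j : ℕ) (F E : Type) [Field F] [Fintype F] [Field E] [Fintype E]
    [Algebra F E] (hq : Fintype.card F = q) (hn : Module.finrank F E = n) (hn1 : 1 ≤ n)
    (hj : j ≤ n - 1) (c : E)
    (hc : c ^ ((q ^ n - 1) / (q ^ Nat.gcd j n - 1)) ≠ 1) :
    Function.Bijective (fun y : E => y - c * y ^ q ^ j) :=
  stmt4_general q n j F E hq hn c hc
end

section
/- Fix a prime power q and integers n ≥ 2 and 2 ≤ d ≤ n. For each m ≥ n let ℓ_m = (B_m − 1)/(q−1), where B_m = Σ_{i=0}^{d−1} [n choose i]_q · ∏_{j=0}^{i−1}(q^m−q^j) is the number of n×m matrices over F_q of rank at most d−1. Then the ratio C((q^{mn}−q^{m(n−d+1)})/(q−1), ℓ_m) / C((q^{mn}−1)/(q−1), ℓ_m) converges, as m → +∞, to exp(−[n choose d−1]_q/(q−1)). -/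
open Filter

/-- The q-binomial (Gaussian) coefficient `[i choose j]_q`, as a rational number, via the
product formula `∏_{l=0}^{j−1} (q^i−q^l)/(q^j−q^l)`. -/
def qBin (q i j : ℕ) : ℚ :=
  ∏ l ∈ Finset.range j, ((q : ℚ) ^ i - q ^ l) / ((q : ℚ) ^ j - q ^ l)

open Topology Finset Real

/-!
Write `u = q^m`. The two binomial tops are `N = (u^n - 1)/(q - 1)` and
`K = N - (u^(n-d+1) - 1)/(q - 1)`, and the hypothesis on `ℓ` makes it a polynomial in `u` of
degree `d - 1` with leading coefficient `c = [n choose d-1]_q/(q - 1)`. The ratio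
`C(K, ℓ)/C(N, ℓ) = ∏_{i<ℓ} (K - i)/(N - i)` lies between `((K - ℓ)/(N - ℓ))^ℓ` and `(K/N)^ℓ`,
and `r^ℓ → exp(-c)` as soon as `r → 1` and `ℓ (1 - r) → c`, which holds for both bounds
since `ℓ (N - K)/N → c`.
-/

section ChooseRatio

lemma cast_choose_div_cast_choose (a b k : ℕ) :
    (a.choose k : ℝ) / b.choose k = ∏ i ∈ range k, ((a : ℝ) - i) / (b - i) := by
  have hdesc (n : ℕ) : (n.choose k : ℝ) * k.factorial = ∏ i ∈ range k, ((n : ℝ) - i) := by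
    rw [← descPochhammer_eval_eq_prod_range, descPochhammer_eval_eq_descFactorial,
      Nat.descFactorial_eq_factorial_mul_choose, Nat.cast_mul, mul_comm]
  rw [prod_div_distrib, ← hdesc, ← hdesc,
    mul_div_mul_right _ _ (Nat.cast_ne_zero.2 k.factorial_ne_zero)]

lemma sub_div_sub_le_sub_div_sub {a b x y : ℝ} (hab : a ≤ b) (hxy : x ≤ y) (hyb : y < b) :
    (a - y) / (b - y) ≤ (a - x) / (b - x) := by
  rw [div_le_div_iff₀ (by linarith) (by linarith)]
  nlinarith

variable {a b k : ℕ}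

lemma pow_le_cast_choose_div_cast_choose (hka : k ≤ a) (hab : a ≤ b) (hkb : k < b) :
    (((a : ℝ) - k) / (b - k)) ^ k ≤ (a.choose k : ℝ) / b.choose k := by
  have hka' : (k : ℝ) ≤ a := by exact_mod_cast hka
  have hkb' : (k : ℝ) < b := by exact_mod_cast hkb
  rw [cast_choose_div_cast_choose]
  calc _ = ∏ _i ∈ range k, ((a : ℝ) - k) / (b - k) := by simp [div_pow]
    _ ≤ _ := prod_le_prod (fun _ _ => div_nonneg (by linarith) (by linarith)) fun i hi =>
      sub_div_sub_le_sub_div_sub (by exact_mod_cast hab) (by exact_mod_cast (mem_range.1 hi).le)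
        hkb'

lemma cast_choose_div_cast_choose_le_pow (hka : k ≤ a) (hab : a ≤ b) (hkb : k < b) :
    (a.choose k : ℝ) / b.choose k ≤ ((a : ℝ) / b) ^ k := by
  have hka' : (k : ℝ) ≤ a := by exact_mod_cast hka
  have hkb' : (k : ℝ) < b := by exact_mod_cast hkb
  rw [cast_choose_div_cast_choose]
  calc _ ≤ ∏ _i ∈ range k, ((a : ℝ) - 0) / (b - 0) := by
        refine prod_le_prod (fun i hi => ?_) fun i hi => ?_ <;>
          have : (i : ℝ) < k := by exact_mod_cast mem_range.1 hi
        · exact div_nonneg (by linarith) (by linarith)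
        · exact sub_div_sub_le_sub_div_sub (by exact_mod_cast hab) i.cast_nonneg (by linarith)
    _ = _ := by simp [div_pow]

end ChooseRatio

lemma tendsto_prod_range_sub_div_pow (a : ℕ → ℝ) (i : ℕ) :
    Tendsto (fun u : ℝ => (∏ j ∈ range i, (u - a j)) / u ^ i) atTop (𝓝 1) := by
  have h : Tendsto (fun u : ℝ => ∏ j ∈ range i, (1 - a j * u⁻¹)) atTop (𝓝 1) := by
    simpa using tendsto_finsetProd (range i) fun j _ =>
      (tendsto_inv_atTop_zero.const_mul (a j)).const_sub 1
  refine h.congr' ?_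
  filter_upwards [eventually_ne_atTop 0] with u hu
  rw [← card_range i, ← prod_const, card_range, ← prod_div_distrib]
  refine prod_congr rfl fun j _ => ?_
  field_simp

lemma tendsto_sum_mul_prod_sub_div_pow (w a : ℕ → ℝ) (e : ℕ) :
    Tendsto (fun u : ℝ => (∑ i ∈ range (e + 1), w i * ∏ j ∈ range i, (u - a j)) / u ^ e)
      atTop (𝓝 (w e)) := by
  have hlow : Tendsto (fun u : ℝ => ∑ i ∈ range e,
      w i * ((∏ j ∈ range i, (u - a j)) / u ^ i * (u ^ i / u ^ e))) atTop (𝓝 0) := by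
    simpa using tendsto_finsetSum (range e) fun i hi =>
      ((tendsto_prod_range_sub_div_pow a i).mul
        (tendsto_pow_div_pow_atTop_zero (mem_range.1 hi))).const_mul (w i)
  have htop := (tendsto_prod_range_sub_div_pow a e).const_mul (w e)
  have := hlow.add htop
  rw [zero_add, mul_one] at this
  refine this.congr' ?_
  filter_upwards [eventually_ne_atTop 0] with u hu
  rw [sum_range_succ, add_div, sum_div, mul_div_assoc]
  congr 1
  refine sum_congr rfl fun i _ => ?_
  field_simp

open Polynomial in
lemma tendsto_pow_div_pow_sub_one {i n : ℕ} (h : i < n) :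
    Tendsto (fun u : ℝ => u ^ i / (u ^ n - 1)) atTop (𝓝 0) := by
  have := div_tendsto_atTop_zero_of_degree_lt (𝕜 := ℝ) (X ^ i) (X ^ n - C 1) (by
    rw [degree_X_pow, degree_X_pow_sub_C (by omega)]
    exact_mod_cast h)
  simpa only [eval_sub, eval_pow, eval_X, eval_C] using this

lemma tendsto_pow_sub_pow_div_pow_sub_one {i n : ℕ} (h : i < n) :
    Tendsto (fun u : ℝ => (u ^ n - u ^ i) / (u ^ n - 1)) atTop (𝓝 1) := by
  have := (tendsto_const_nhds (x := (1 : ℝ))).sub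
    ((tendsto_pow_div_pow_sub_one h).sub (tendsto_pow_div_pow_sub_one (i := 0) (n := n) (by omega)))
  rw [sub_zero, sub_zero] at this
  refine this.congr' ?_
  filter_upwards [eventually_gt_atTop 1] with u hu
  have : u ^ n - 1 ≠ 0 := (sub_pos.2 (one_lt_pow₀ hu (by omega))).ne'
  field_simp
  ring

lemma cast_pow_sub_pow_div_sub_one {q i j : ℕ} (hq : 1 < q) (hji : j ≤ i) :
    (((q ^ i - q ^ j) / (q - 1) : ℕ) : ℝ) = ((q : ℝ) ^ i - q ^ j) / (q - 1) := by
  have hdvd : q - 1 ∣ q ^ i - q ^ j := by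
    obtain ⟨k, rfl⟩ := Nat.exists_eq_add_of_le hji
    rw [pow_add, ← Nat.mul_sub_one]
    exact Dvd.dvd.mul_left (by simpa using Nat.sub_dvd_pow_sub_pow q 1 k) _
  rw [Nat.cast_div hdvd (by rw [Nat.cast_ne_zero]; omega),
    Nat.cast_sub (Nat.pow_le_pow_right hq.le hji), Nat.cast_sub hq.le]
  push_cast
  rfl

section Limits

variable {α : Type*} {l : Filter α}

lemma tendsto_pow_exp_of_tendsto_mul_sub_one {r : α → ℝ} {k : α → ℕ} {c : ℝ}
    (hr : Tendsto r l (𝓝 1)) (hc : Tendsto (fun x => k x * (r x - 1)) l (𝓝 c)) :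
    Tendsto (fun x => r x ^ k x) l (𝓝 (exp c)) := by
  -- `log r = (r - 1) * dslope log 1 r`, and `dslope log 1` is continuous at `1` with value `1`.
  have hslope : Tendsto (fun x => dslope log 1 (r x)) l (𝓝 1) := by
    have := (continuousAt_dslope_same.2 (differentiableAt_log one_ne_zero)).tendsto.comp hr
    rwa [dslope_same, deriv_log, inv_one] at this
  have hlog : Tendsto (fun x => k x * log (r x)) l (𝓝 c) := by
    have := hc.mul hslope
    rw [mul_one] at this
    refine this.congr fun x => ?_
    rw [mul_assoc, ← smul_eq_mul (r x - 1), sub_smul_dslope, log_one, sub_zero]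
  refine ((continuous_exp.tendsto c).comp hlog).congr' ?_
  filter_upwards [hr.eventually (lt_mem_nhds one_pos)] with x hx
  rw [Function.comp_apply, exp_nat_mul, exp_log hx]

theorem tendsto_cast_choose_div_cast_choose {a b k : α → ℕ} {c : ℝ}
    (hab : ∀ᶠ x in l, a x ≤ b x) (hr : Tendsto (fun x => (a x : ℝ) / b x) l (𝓝 1))
    (hkb : Tendsto (fun x => (k x : ℝ) / b x) l (𝓝 0))
    (hc : Tendsto (fun x => k x * (1 - (a x : ℝ) / b x)) l (𝓝 c)) :
    Tendsto (fun x => ((a x).choose (k x) : ℝ) / (b x).choose (k x)) l (𝓝 (exp (-c))) := by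
  have hka : ∀ᶠ x in l, k x < a x ∧ a x ≤ b x := by
    filter_upwards [hkb.eventually_lt hr zero_lt_one, hab] with x hx hab
    have hb : 0 < b x := Nat.pos_of_ne_zero fun h => by simp [h] at hx
    exact ⟨by exact_mod_cast (div_lt_div_iff_of_pos_right (by positivity)).1 hx, hab⟩
  have hbk : ∀ᶠ x in l, (b x : ℝ) ≠ 0 ∧ (b x : ℝ) - k x ≠ 0 := by
    filter_upwards [hka] with x ⟨hk, hab⟩
    have : (k x : ℝ) < b x := by exact_mod_cast hk.trans_le hab
    constructor <;> linarith [(k x).cast_nonneg (α := ℝ)]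
  have hkb' : Tendsto (fun x => 1 - (k x : ℝ) / b x) l (𝓝 1) := by
    simpa using tendsto_const_nhds.sub hkb
  have hlower : Tendsto (fun x => (((a x : ℝ) - k x) / (b x - k x)) ^ k x) l (𝓝 (exp (-c))) := by
    have hs := (hr.sub hkb).div hkb' one_ne_zero
    have hcs := hc.neg.div hkb' one_ne_zero
    rw [sub_zero, div_one] at hs
    rw [div_one] at hcs
    refine tendsto_pow_exp_of_tendsto_mul_sub_one (hs.congr' ?_) (hcs.congr' ?_) <;>
      filter_upwards [hbk] with x ⟨hb, hbk⟩ <;>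
      simp only [Pi.div_apply]
    · field_simp
    · field_simp
      ring
  have hupper : Tendsto (fun x => ((a x : ℝ) / b x) ^ k x) l (𝓝 (exp (-c))) :=
    tendsto_pow_exp_of_tendsto_mul_sub_one hr (hc.neg.congr fun x => by ring)
  refine tendsto_of_tendsto_of_tendsto_of_le_of_le' hlower hupper ?_ ?_ <;>
    filter_upwards [hka] with x ⟨hk, hab⟩
  · exact pow_le_cast_choose_div_cast_choose hk.le hab (hk.trans_le hab)
  · exact cast_choose_div_cast_choose_le_pow hk.le hab (hk.trans_le hab)

theorem tendsto_cast_choose_div_cast_choose_of_pow {u : α → ℝ} (hu : Tendsto u l atTop)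
    {e f n : ℕ} (he : 0 < e) (hf : 0 < f) (hn : e + f = n) {s c : ℝ} (hs : 0 < s)
    {a b k : α → ℕ} (ha : ∀ x, (a x : ℝ) = (u x ^ n - u x ^ f) / s)
    (hb : ∀ x, (b x : ℝ) = (u x ^ n - 1) / s)
    (hk : Tendsto (fun x => (k x : ℝ) / u x ^ e) l (𝓝 c)) :
    Tendsto (fun x => ((a x).choose (k x) : ℝ) / (b x).choose (k x)) l (𝓝 (exp (-c))) := by
  subst hn
  have hu1 : ∀ᶠ x in l, u x ≠ 0 ∧ u x ^ (e + f) - 1 ≠ 0 ∧ 1 ≤ u x ^ f := by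
    filter_upwards [hu.eventually_gt_atTop 1] with x hx
    exact ⟨by positivity, (sub_pos.2 (one_lt_pow₀ hx (by omega))).ne', one_le_pow₀ hx.le⟩
  refine tendsto_cast_choose_div_cast_choose ?_ ?_ ?_ ?_
  · filter_upwards [hu1] with x ⟨_, _, hx⟩
    have : (a x : ℝ) ≤ b x := by
      rw [ha, hb]
      gcongr
    exact_mod_cast this
  · refine ((tendsto_pow_sub_pow_div_pow_sub_one (show f < e + f by omega)).comp hu).congr
      fun x => ?_
    rw [ha, hb, div_div_div_cancel_right₀ hs.ne']
    rfl
  · have := (hk.mul ((tendsto_pow_div_pow_sub_one (show e < e + f by omega)).comp hu)).mul_const s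
    rw [mul_zero, zero_mul] at this
    refine this.congr' ?_
    filter_upwards [hu1] with x ⟨hx0, hx1, _⟩
    rw [hb, Function.comp_apply]
    field_simp
  · have := hk.mul ((tendsto_pow_sub_pow_div_pow_sub_one (show e < e + f by omega)).comp hu)
    rw [mul_one] at this
    refine this.congr' ?_
    filter_upwards [hu1] with x ⟨hx0, hx1, _⟩
    rw [ha, hb, Function.comp_apply]
    field_simp
    ring

end Limits

lemma tendsto_cast_div_pow_of_cast_mul_sub_one_eq {q d N : ℕ} (hq : 1 < q) (hd : 1 < d)
    (w : ℕ → ℚ) {ℓ : ℕ → ℕ} (hℓ : ∀ m, N ≤ m → (ℓ m : ℚ) * ((q : ℚ) - 1) =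
      (∑ i ∈ range d, w i * ∏ j ∈ range i, ((q : ℚ) ^ m - q ^ j)) - 1) :
    Tendsto (fun m => (ℓ m : ℝ) / ((q : ℝ) ^ m) ^ (d - 1)) atTop
      (𝓝 ((w (d - 1) : ℝ) / (q - 1))) := by
  have hQ : (1 : ℝ) < q := by exact_mod_cast hq
  obtain ⟨e, rfl⟩ : ∃ e, d = e + 1 := ⟨d - 1, by omega⟩
  have hP := (tendsto_sum_mul_prod_sub_div_pow (fun i => (w i : ℝ)) (fun j => (q : ℝ) ^ j) e).sub
    (tendsto_pow_div_pow_atTop_zero (p := 0) (q := e) (by omega))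
  rw [sub_zero] at hP
  refine ((hP.comp (tendsto_pow_atTop_atTop_of_one_lt hQ)).div_const ((q : ℝ) - 1)).congr' ?_
  filter_upwards [eventually_ge_atTop N] with m hm
  have h := congrArg (fun x : ℚ => (x : ℝ)) (hℓ m hm)
  push_cast at h
  have : (q : ℝ) - 1 ≠ 0 := by linarith
  rw [Nat.add_sub_cancel, Function.comp_apply, pow_zero, ← sub_div, div_div,
    div_eq_div_iff (by positivity) (by positivity)]
  linear_combination (((q : ℝ) ^ m) ^ e) * h.symm

theorem stmt9_general (q n d : ℕ) (hq : IsPrimePow q) (hd1 : 2 ≤ d) (hd2 : d ≤ n)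
    (ℓ : ℕ → ℕ)
    (hℓ : ∀ m, n ≤ m → (ℓ m : ℚ) * ((q : ℚ) - 1) =
      (∑ i ∈ Finset.range d, qBin q n i * ∏ j ∈ Finset.range i, ((q : ℚ) ^ m - q ^ j)) - 1) :
    Tendsto (fun m : ℕ =>
        ((((q ^ (m * n) - q ^ (m * (n - d + 1))) / (q - 1)).choose (ℓ m) : ℝ) /
          ((((q ^ (m * n) - 1) / (q - 1)).choose (ℓ m) : ℕ) : ℝ)))
      atTop (nhds (Real.exp (-((qBin q n (d - 1) : ℚ) : ℝ) / ((q : ℝ) - 1)))) := by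
  have hQ : (1 : ℝ) < q := by exact_mod_cast hq.one_lt
  rw [neg_div]
  refine tendsto_cast_choose_div_cast_choose_of_pow (tendsto_pow_atTop_atTop_of_one_lt hQ)
    (e := d - 1) (f := n - d + 1) (n := n) (by omega) (by omega) (by omega) (sub_pos.2 hQ)
    (fun m => ?_) (fun m => ?_)
    (tendsto_cast_div_pow_of_cast_mul_sub_one_eq hq.one_lt (by omega) _ hℓ)
  · rw [cast_pow_sub_pow_div_sub_one hq.one_lt (Nat.mul_le_mul_left m (by omega)), pow_mul,
      pow_mul]
  · simpa [pow_mul] using cast_pow_sub_pow_div_sub_one hq.one_lt (Nat.zero_le (m * n))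

/-- Fix a prime power `q`, `n ≥ 2` and `2 ≤ d ≤ n`. For `m ≥ n` let
`ℓ_m = (B_m − 1)/(q−1)` where `B_m = Σ_{i=0}^{d−1} [n choose i]_q ∏_{j=0}^{i−1}(q^m−q^j)`
is the number of `n×m` matrices over `F_q` of rank at most `d−1`. Then
`C((q^{mn}−q^{m(n−d+1)})/(q−1), ℓ_m) / C((q^{mn}−1)/(q−1), ℓ_m)` converges, as `m → ∞`,
to `exp(−[n choose d−1]_q/(q−1))`. -/
theorem stmt9 (q n d : ℕ) (hq : IsPrimePow q) (hn : 2 ≤ n) (hd1 : 2 ≤ d) (hd2 : d ≤ n)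
    (ℓ : ℕ → ℕ)
    (hℓ : ∀ m, n ≤ m → (ℓ m : ℚ) * ((q : ℚ) - 1) =
      (∑ i ∈ Finset.range d, qBin q n i * ∏ j ∈ Finset.range i, ((q : ℚ) ^ m - q ^ j)) - 1) :
    Tendsto (fun m : ℕ =>
        ((((q ^ (m * n) - q ^ (m * (n - d + 1))) / (q - 1)).choose (ℓ m) : ℝ) /
          ((((q ^ (m * n) - 1) / (q - 1)).choose (ℓ m) : ℕ) : ℝ)))
      atTop (nhds (Real.exp (-((qBin q n (d - 1) : ℚ) : ℝ) / ((q : ℝ) - 1)))) :=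
  stmt9_general q n d hq hd1 hd2 ℓ hℓ
end

section
/- Let q be a prime power and N, ℓ positive integers with N ≤ ℓ. Let G ∈ F_q^{N×ℓ} be a matrix of rank N whose columns p_1, …, p_ℓ are nonzero and span pairwise distinct one-dimensional subspaces P_1, …, P_ℓ of F_q^N, and let C_P ≤ F_q^ℓ be the row space of G. Then the number of (N−1)-dimensional subspaces (hyperplanes) H of F_q^N with p_i ∉ H for all i equals W_ℓ(C_P)/(q−1), where W_ℓ(C_P) is the number of vectors in C_P all of whose ℓ coordinates are nonzero. -/
/-!
A hyperplane is the kernel of a nonzero linear functional, unique up to a nonzero scalar, so the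
hyperplanes avoiding every `p_j` correspond `(q - 1)`-to-one to the functionals vanishing at no
`p_j`. Writing a functional as `x ↦ c ⬝ᵥ x`, its values at the columns of `G` form the codeword
`c ᵥ* G`; as the rows of `G` are independent, this identifies functionals with codewords, and
those vanishing at no column with the codewords of full weight.
-/

open Module LinearMap

namespace Module.Dual

variable {K V ι : Type*} [Field K] [AddCommGroup V] [Module K V]

theorem exists_eq_smul_of_ker_le {f g : Dual K V} (h : ker f ≤ ker g) : ∃ a : K, g = a • f := by
  have : g ∈ Submodule.span K (Set.range fun _ : Unit => f) :=
    mem_span_of_iInf_ker_le_ker (by simpa using h)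
  simpa [Submodule.mem_span_singleton, eq_comm] using this

variable [FiniteDimensional K V]

theorem exists_ker_eq_of_finrank_add_one {H : Submodule K V}
    (hH : finrank K H + 1 = finrank K V) : ∃ f : Dual K V, ker f = H := by
  have hquot : finrank K (V ⧸ H) = finrank K K := by
    have := H.finrank_quotient_add_finrank
    rw [finrank_self]
    omega
  obtain ⟨e⟩ := FiniteDimensional.nonempty_linearEquiv_of_finrank_eq hquot
  exact ⟨e.toLinearMap ∘ₗ H.mkQ, by
    rw [ker_comp, LinearEquiv.ker, Submodule.comap_bot, Submodule.ker_mkQ]⟩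

noncomputable def avoidingHyperplanesProdUnitsEquiv (p : ι → V) [Nonempty ι] :
    {H : Submodule K V // finrank K H + 1 = finrank K V ∧ ∀ j, p j ∉ H} × Kˣ ≃
      {f : Dual K V // ∀ j, f (p j) ≠ 0} := by
  choose f hf using fun H : {H : Submodule K V // finrank K H + 1 = finrank K V ∧ ∀ j, p j ∉ H} =>
    exists_ker_eq_of_finrank_add_one H.2.1
  have hf_apply (H) (j : ι) : f H (p j) ≠ 0 := fun h => H.2.2 j (hf H ▸ h)
  refine Equiv.ofBijective (fun Hu => ⟨(Hu.2 : K) • f Hu.1, fun j =>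
    mul_ne_zero Hu.2.ne_zero (hf_apply Hu.1 j)⟩) ⟨?_, ?_⟩
  · rintro ⟨H, u⟩ ⟨H', u'⟩ h
    have hfu : (u : K) • f H = (u' : K) • f H' := congrArg Subtype.val h
    obtain rfl : H = H' := Subtype.ext <| by
      have hker := congrArg ker hfu
      rwa [ker_smul _ _ u.ne_zero, ker_smul _ _ u'.ne_zero, hf, hf] at hker
    have hf0 : f H ≠ 0 := fun h0 =>
      hf_apply H (Classical.arbitrary ι) (by rw [h0, LinearMap.zero_apply])
    exact Prod.ext rfl (Units.ext (smul_left_injective K hf0 hfu))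
  · rintro ⟨g, hg⟩
    have hg0 : g ≠ 0 := fun h0 => hg (Classical.arbitrary ι) (by rw [h0, LinearMap.zero_apply])
    let H : {H : Submodule K V // finrank K H + 1 = finrank K V ∧ ∀ j, p j ∉ H} :=
      ⟨ker g, finrank_ker_add_one_of_ne_zero hg0, hg⟩
    obtain ⟨a, ha⟩ := exists_eq_smul_of_ker_le (hf H).le
    have ha0 : a ≠ 0 := by rintro rfl; exact hg0 (by rw [ha, zero_smul])
    exact ⟨⟨H, Units.mk0 a ha0⟩, Subtype.ext ha.symm⟩

end Module.Dual

namespace Matrix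

variable {K m n : Type*} [Field K] [Fintype m]

theorem linearIndependent_row_of_rank_eq_card [Fintype n] {M : Matrix m n K}
    (h : M.rank = Fintype.card m) : LinearIndependent K M.row := by
  rw [linearIndependent_iff_card_eq_finrank_span, Set.finrank, ← rank_eq_finrank_span_row, h]

variable [DecidableEq m]

noncomputable def nonvanishingDualEquivFullWeightRowSpace {M : Matrix m n K}
    (hM : LinearIndependent K M.row) :
    {f : Dual K (m → K) // ∀ j, f (fun i => M i j) ≠ 0} ≃
      {x : Submodule.span K (Set.range M.row) // ∀ j, (x : n → K) j ≠ 0} :=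
  let e : Dual K (m → K) ≃ₗ[K] Submodule.span K (Set.range M.row) :=
    (dotProductEquiv K m).symm ≪≫ₗ LinearEquiv.ofInjective _ (vecMul_injective_iff.mpr hM) ≪≫ₗ
      LinearEquiv.ofEq _ _ (range_vecMulLinear M)
  e.toEquiv.subtypeEquiv fun f => forall_congr' fun j => by
    have h : (e f : n → K) j = f (fun i => M i j) :=
      LinearMap.congr_fun ((dotProductEquiv K m).apply_symm_apply f) _
    rw [← h]
    rfl

end Matrix

theorem stmt16_general (q N ℓ : ℕ) (F : Type) [Field F] [Fintype F] (hq : Fintype.card F = q)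
    (hN : 0 < N) (hℓ : N ≤ ℓ) (G : Matrix (Fin N) (Fin ℓ) F) (hrank : G.rank = N) :
    (Nat.card {H : Submodule F (Fin N → F) //
        Module.finrank F H = N - 1 ∧ ∀ j : Fin ℓ, (fun i => G i j) ∉ H} : ℚ) =
      (Nat.card {x : Submodule.span F (Set.range fun i : Fin N => (G i : Fin ℓ → F)) //
          ∀ j : Fin ℓ, (x : Fin ℓ → F) j ≠ 0} : ℚ) / ((q : ℚ) - 1) := by
  have : Nonempty (Fin ℓ) := ⟨⟨0, hN.trans_le hℓ⟩⟩
  have hrows : LinearIndependent F G.row :=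
    Matrix.linearIndependent_row_of_rank_eq_card (by rw [hrank, Fintype.card_fin])
  have hyperplane_iff (H : Submodule F (Fin N → F)) :
      finrank F H = N - 1 ↔ finrank F H + 1 = finrank F (Fin N → F) := by
    rw [finrank_fin_fun]
    omega
  have hq2 : 2 ≤ q := hq ▸ Fintype.one_lt_card
  have hq1 : (q : ℚ) - 1 ≠ 0 := by
    rw [sub_ne_zero, Nat.cast_ne_one]
    omega
  rw [eq_div_iff hq1,
    show (Set.range fun i : Fin N => (G i : Fin ℓ → F)) = Set.range G.row from rfl,
    ← Nat.card_congr (Matrix.nonvanishingDualEquivFullWeightRowSpace hrows),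
    ← Nat.card_congr (Dual.avoidingHyperplanesProdUnitsEquiv _), Nat.card_prod, Nat.card_units,
    Nat.card_eq_fintype_card (α := F), hq,
    Nat.card_congr (Equiv.subtypeEquivRight fun H => and_congr_left' (hyperplane_iff H).symm),
    Nat.cast_mul, Nat.cast_sub (by omega), Nat.cast_one]

/-- Let `G ∈ F_q^{N×ℓ}` have rank `N`, with nonzero columns spanning pairwise distinct
one-dimensional subspaces of `F_q^N`, and let `C_P ≤ F_q^ℓ` be the row space of `G`.
Then the number of hyperplanes `H` of `F_q^N` avoiding all columns of `G` equals
`W_ℓ(C_P)/(q−1)`, where `W_ℓ(C_P)` is the number of vectors of `C_P` with all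
coordinates nonzero. -/
theorem stmt16 (q N ℓ : ℕ) (F : Type) [Field F] [Fintype F] (hq : Fintype.card F = q)
    (hN : 0 < N) (hℓ : N ≤ ℓ) (G : Matrix (Fin N) (Fin ℓ) F) (hrank : G.rank = N)
    (hcol : ∀ j : Fin ℓ, (fun i => G i j) ≠ (0 : Fin N → F))
    (hdist : ∀ j j' : Fin ℓ, j ≠ j' →
      Submodule.span F {(fun i => G i j : Fin N → F)} ≠
        Submodule.span F {(fun i => G i j' : Fin N → F)}) :
    (Nat.card {H : Submodule F (Fin N → F) //
        Module.finrank F H = N - 1 ∧ ∀ j : Fin ℓ, (fun i => G i j) ∉ H} : ℚ) =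
      (Nat.card {x : Submodule.span F (Set.range fun i : Fin N => (G i : Fin ℓ → F)) //
          ∀ j : Fin ℓ, (x : Fin ℓ → F) j ≠ 0} : ℚ) / ((q : ℚ) - 1) :=
  stmt16_general q N ℓ F hq hN hℓ G hrank
end

section
/- Let q be a prime power, N ≥ 2, and let P be an arc of size ℓ in X = F_q^N with ℓ ≥ N, i.e., a set of ℓ one-dimensional subspaces of X such that every N elements of P together span X. Then the number of (N−1)-dimensional subspaces (hyperplanes) of X containing no element of P equals Σ_{j=0}^{N−1} (−1)^j · C(ℓ−1, j) · q^{N−j−1}, where C denotes the ordinary binomial coefficient. -/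
open Module Finset

lemma altsum (ℓ : ℕ) (hℓ : 1 ≤ ℓ) (N : ℕ) :
    ∑ k ∈ Finset.range (N+1), (-1:ℤ)^k * (ℓ.choose k) = (-1)^N * ((ℓ-1).choose N) := by
  obtain ⟨m, rfl⟩ := Nat.exists_eq_add_of_le hℓ
  simp only [Nat.add_sub_cancel_left] at *
  induction N with
  | zero => simp
  | succ n ih =>
    rw [Finset.sum_range_succ, ih]
    have : (1 + m).choose (n + 1) = m.choose n + m.choose (n+1) := by
      rw [Nat.add_comm 1 m, Nat.choose_succ_succ']
    rw [this]
    push_cast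
    ring

lemma mainid (x : ℤ) (ℓ : ℕ) (hℓ : 1 ≤ ℓ) (N : ℕ) (hN : 1 ≤ N) :
    ∑ k ∈ Finset.range N, (-1:ℤ)^k * (ℓ.choose k) * (x^(N-k) - 1) =
    (x-1) * ∑ j ∈ Finset.range N, (-1:ℤ)^j * ((ℓ-1).choose j) * x^(N-1-j) := by
  induction N, hN using Nat.le_induction with
  | base => simp
  | succ n hn ih =>
    have h1 : ∑ k ∈ Finset.range (n+1), (-1:ℤ)^k * (ℓ.choose k) * (x^(n+1-k) - 1)
        = x * (∑ k ∈ Finset.range n, (-1:ℤ)^k * (ℓ.choose k) * (x^(n-k) - 1))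
          + (x - 1) * ∑ k ∈ Finset.range (n+1), (-1:ℤ)^k * (ℓ.choose k) := by
      rw [Finset.sum_range_succ, Finset.sum_range_succ]
      have hc : ∀ k ∈ Finset.range n, (-1:ℤ)^k * (ℓ.choose k) * (x^(n+1-k) - 1)
          = x * ((-1:ℤ)^k * (ℓ.choose k) * (x^(n-k) - 1)) + (x-1) * ((-1:ℤ)^k * (ℓ.choose k)) := by
        intro k hk
        have hk' : k < n := Finset.mem_range.mp hk
        have : n + 1 - k = (n - k) + 1 := by omega
        rw [this, pow_succ]
        ring
      rw [Finset.sum_congr rfl hc, Finset.sum_add_distrib, ← Finset.mul_sum, ← Finset.mul_sum]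
      have hn1 : n + 1 - n = 1 := by omega
      rw [hn1]
      ring
    have h2 : (x-1) * ∑ j ∈ Finset.range (n+1), (-1:ℤ)^j * ((ℓ-1).choose j) * x^(n+1-1-j)
        = x * ((x-1) * ∑ j ∈ Finset.range n, (-1:ℤ)^j * ((ℓ-1).choose j) * x^(n-1-j))
          + (x-1) * ((-1:ℤ)^n * ((ℓ-1).choose n)) := by
      rw [Finset.sum_range_succ, mul_add]
      have : n + 1 - 1 - n = 0 := by omega
      rw [this, pow_zero]
      congr 1
      · rw [Finset.mul_sum, Finset.mul_sum, Finset.mul_sum]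
        apply Finset.sum_congr rfl
        intro j hj
        have hj' : j < n := Finset.mem_range.mp hj
        have : n + 1 - 1 - j = (n - 1 - j) + 1 := by omega
        rw [this, pow_succ]
        ring
      · ring
    rw [h1, h2, ih, altsum ℓ hℓ n]

/-- subadditivity of finrank over a finite sup of submodules -/
lemma sup_finrank_le {F V : Type} [Field F] [AddCommGroup V] [Module F V]
    [FiniteDimensional F V] (t : Finset (Submodule F V)) :
    Module.finrank F (t.sup id : Submodule F V) ≤ ∑ L ∈ t, Module.finrank F L := by
  classical
  induction t using Finset.cons_induction with
  | empty => simp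
  | cons a s ha ih =>
    rw [Finset.sup_cons, Finset.sum_cons]
    refine le_trans (Submodule.finrank_add_le_finrank_add_finrank _ _) ?_
    exact Nat.add_le_add_left ih _

lemma card_le_ker {F V : Type} [Field F] [Fintype F] [AddCommGroup V] [Module F V]
    [FiniteDimensional F V] (W : Submodule F V) :
    Nat.card {f : Module.Dual F V // W ≤ LinearMap.ker f}
      = Fintype.card F ^ (Module.finrank F V - Module.finrank F W) := by
  have e : {f : Module.Dual F V // W ≤ LinearMap.ker f} ≃ W.dualAnnihilator :=
    Equiv.subtypeEquivRight (fun f => by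
      simp [Submodule.mem_dualAnnihilator, SetLike.le_def, LinearMap.mem_ker])
  rw [Nat.card_congr e]
  have hfin : Module.finrank F W.dualAnnihilator
      = Module.finrank F V - Module.finrank F W := by
    have h1 : Module.finrank F (V ⧸ W) = Module.finrank F W.dualAnnihilator :=
      (Subspace.quotEquivAnnihilator W).finrank_eq
    have h2 := Submodule.finrank_quotient_add_finrank W
    have h3 : Module.finrank F W ≤ Module.finrank F V := Submodule.finrank_le W
    omega
  have hfinV : Finite V := Module.finite_of_finite F
  have hfinD : Finite (Module.Dual F V) :=
    Finite.of_injective (fun f => (f : V → F)) DFunLike.coe_injective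
  have : Fintype (W.dualAnnihilator) := Fintype.ofFinite _
  rw [Nat.card_eq_fintype_card, card_eq_pow_finrank (K := F), hfin]

lemma arc_rank {F : Type} [Field F] {N : ℕ} {P : Finset (Submodule F (Fin N → F))}
    (hP1 : ∀ L ∈ P, Module.finrank F L = 1) (hNP : N ≤ P.card)
    (harc : ∀ S ⊆ P, S.card = N → S.sup id = (⊤ : Submodule F (Fin N → F)))
    {t : Finset (Submodule F (Fin N → F))} (ht : t ⊆ P) :
    Module.finrank F (t.sup id : Submodule F (Fin N → F)) = min t.card N := by
  classical
  have hdimV : Module.finrank F (Fin N → F) = N := by simp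
  have hub : ∀ u ⊆ P, Module.finrank F (u.sup id : Submodule F (Fin N → F)) ≤ u.card := by
    intro u hu
    refine le_trans (sup_finrank_le u) ?_
    rw [Finset.sum_congr rfl (fun L hL => hP1 L (hu hL)), Finset.sum_const, smul_eq_mul, mul_one]
  rcases le_or_gt N t.card with h | h
  · obtain ⟨u, hut, hucard⟩ := Finset.exists_subset_card_eq h
    have htop : t.sup id = (⊤ : Submodule F (Fin N → F)) := by
      refine top_le_iff.mp ?_
      rw [← harc u (hut.trans ht) hucard]
      exact Finset.sup_mono hut
    rw [htop, finrank_top, hdimV]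
    omega
  · obtain ⟨u, htu, huP, hucard⟩ := Finset.exists_subsuperset_card_eq ht h.le hNP
    have htop : u.sup id = (⊤ : Submodule F (Fin N → F)) := harc u huP hucard
    have hsplit : u.sup id = (t.sup id) ⊔ ((u \ t).sup id) := by
      rw [← Finset.sup_union, Finset.union_sdiff_of_subset htu]
    have hineq : N ≤ Module.finrank F (t.sup id : Submodule F (Fin N → F)) + (N - t.card) := by
      have h1 : Module.finrank F ((t.sup id ⊔ (u \ t).sup id : Submodule F (Fin N → F)))
          ≤ Module.finrank F (t.sup id : Submodule F (Fin N → F))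
            + Module.finrank F ((u \ t).sup id : Submodule F (Fin N → F)) :=
        Submodule.finrank_add_le_finrank_add_finrank _ _
      have h2 : Module.finrank F ((u \ t).sup id : Submodule F (Fin N → F)) ≤ N - t.card := by
        refine le_trans (hub _ (fun L hL => huP (Finset.mem_sdiff.mp hL).1)) ?_
        rw [Finset.card_sdiff_of_subset htu, hucard]
      have h3 : Module.finrank F ((t.sup id ⊔ (u \ t).sup id : Submodule F (Fin N → F))) = N := by
        rw [← hsplit, htop, finrank_top, hdimV]
      omega
    have := hub t ht
    omega

/-- Let `P` be an arc of size `ℓ ≥ N` in `X = F_q^N`, i.e., a set of `ℓ` one-dimensional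
subspaces of `X` such that every `N` elements of `P` span `X`. Then the number of
hyperplanes of `X` containing no element of `P` equals
`Σ_{j=0}^{N−1} (−1)^j · C(ℓ−1, j) · q^{N−j−1}`. -/
theorem stmt17 (q N ℓ : ℕ) (F : Type) [Field F] [Fintype F] (hq : Fintype.card F = q)
    (hN : 2 ≤ N) (hℓ : N ≤ ℓ) (P : Finset (Submodule F (Fin N → F)))
    (hP1 : ∀ L ∈ P, Module.finrank F L = 1) (hPcard : P.card = ℓ)
    (harc : ∀ S ⊆ P, S.card = N → S.sup id = (⊤ : Submodule F (Fin N → F))) :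
    (Nat.card {H : Submodule F (Fin N → F) //
        Module.finrank F H = N - 1 ∧ ∀ L ∈ P, ¬ L ≤ H} : ℤ) =
      ∑ j ∈ Finset.range N, (-1 : ℤ) ^ j * Nat.choose (ℓ - 1) j * (q : ℤ) ^ (N - j - 1) := by
  classical
  have hq2 : 2 ≤ q := hq ▸ Fintype.one_lt_card
  have hdimV : Module.finrank F (Fin N → F) = N := by simp
  have hfinD : Finite (Module.Dual F (Fin N → F)) :=
    Finite.of_injective (fun f => (f : (Fin N → F) → F)) DFunLike.coe_injective
  have : Fintype (Module.Dual F (Fin N → F)) := Fintype.ofFinite _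
  have hfinS : Finite (Submodule F (Fin N → F)) :=
    Finite.of_injective (fun W => (W : Set (Fin N → F))) SetLike.coe_injective
  have : Fintype (Submodule F (Fin N → F)) := Fintype.ofFinite _
  set A : Finset (Module.Dual F (Fin N → F)) :=
    univ.filter (fun f => ∀ L ∈ P, ¬ L ≤ LinearMap.ker f) with hA
  set Hs : Finset (Submodule F (Fin N → F)) :=
    univ.filter (fun H => Module.finrank F H = N - 1 ∧ ∀ L ∈ P, ¬ L ≤ H) with hHs
  -- card of {f | W ≤ ker f} as finset
  have hcardW : ∀ W : Submodule F (Fin N → F),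
      (univ.filter (fun f : Module.Dual F (Fin N → F) => W ≤ LinearMap.ker f)).card
        = q ^ (N - Module.finrank F W) := by
    intro W
    rw [← Fintype.card_subtype, ← Nat.card_eq_fintype_card, card_le_ker, hq, hdimV]
  -- inclusion-exclusion
  have hIE : (A.card : ℤ) = ∑ t ∈ P.powerset, (-1:ℤ)^t.card * (q:ℤ)^(N - min t.card N) := by
    have hind : ∀ f : Module.Dual F (Fin N → F),
        (if (∀ L ∈ P, ¬ L ≤ LinearMap.ker f) then (1:ℤ) else 0)
          = ∑ t ∈ P.powerset, (-1:ℤ)^t.card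
              * (if ∀ L ∈ t, L ≤ LinearMap.ker f then (1:ℤ) else 0) := by
      intro f
      have hprod : (if (∀ L ∈ P, ¬ L ≤ LinearMap.ker f) then (1:ℤ) else 0)
          = ∏ L ∈ P, ((if L ≤ LinearMap.ker f then (-1:ℤ) else 0) + 1) := by
        by_cases h : ∀ L ∈ P, ¬ L ≤ LinearMap.ker f
        · rw [if_pos h,
            Finset.prod_congr rfl (fun L hL => by rw [if_neg (h L hL), zero_add]),
            Finset.prod_const_one]
        · rw [if_neg h]
          push_neg at h
          obtain ⟨L, hL, hle⟩ := h
          exact (Finset.prod_eq_zero hL (by rw [if_pos hle]; ring)).symm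
      rw [hprod, Finset.prod_add]
      apply Finset.sum_congr rfl
      intro t ht
      rw [Finset.prod_const_one, mul_one]
      by_cases h : ∀ L ∈ t, L ≤ LinearMap.ker f
      · rw [if_pos h, mul_one,
          Finset.prod_congr rfl (fun L hL => if_pos (h L hL)), Finset.prod_const]
      · rw [if_neg h, mul_zero]
        push_neg at h
        obtain ⟨L, hL, hle⟩ := h
        exact Finset.prod_eq_zero hL (if_neg hle)
    have h1 : (A.card : ℤ) = ∑ f : Module.Dual F (Fin N → F),
        (if (∀ L ∈ P, ¬ L ≤ LinearMap.ker f) then (1:ℤ) else 0) := by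
      rw [hA, Finset.card_filter]
      push_cast
      rfl
    rw [h1, Finset.sum_congr rfl (fun f _ => hind f), Finset.sum_comm]
    apply Finset.sum_congr rfl
    intro t ht
    have ht' : t ⊆ P := Finset.mem_powerset.mp ht
    rw [← Finset.mul_sum, Finset.sum_boole]
    have hfilt : (univ.filter (fun f : Module.Dual F (Fin N → F) =>
        ∀ L ∈ t, L ≤ LinearMap.ker f)).card
        = (univ.filter (fun f : Module.Dual F (Fin N → F) =>
            t.sup id ≤ LinearMap.ker f)).card := by
      congr 1
      apply Finset.filter_congr
      intro f _
      simp [Finset.sup_le_iff]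
    rw [hfilt, hcardW, arc_rank hP1 (by omega) harc ht']
    push_cast
    ring
  -- grouping by size
  have hgroup : ∑ t ∈ P.powerset, (-1:ℤ)^t.card * (q:ℤ)^(N - min t.card N)
      = ∑ k ∈ range (ℓ+1), (-1:ℤ)^k * (ℓ.choose k) * (q:ℤ)^(N - min k N) := by
    rw [Finset.sum_powerset, hPcard]
    apply Finset.sum_congr rfl
    intro k hk
    have hconst : ∀ t ∈ P.powersetCard k,
        (-1:ℤ)^t.card * (q:ℤ)^(N - min t.card N) = (-1:ℤ)^k * (q:ℤ)^(N - min k N) := by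
      intro t ht
      rw [(Finset.mem_powersetCard.mp ht).2]
    rw [Finset.sum_congr rfl hconst, Finset.sum_const, Finset.card_powersetCard, hPcard,
      nsmul_eq_mul]
    ring
  -- fibration
  have hfib : A.card = Hs.card * (q - 1) := by
    have hker1 : ∀ f : Module.Dual F (Fin N → F), f ≠ 0 →
        Module.finrank F (LinearMap.ker f) = N - 1 := by
      intro f hf
      have := Module.Dual.finrank_ker_add_one_of_ne_zero hf
      rw [hdimV] at this
      omega
    have hPne : P.Nonempty := Finset.card_pos.mp (by omega)
    have hA0 : ∀ f ∈ A, f ≠ 0 := by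
      intro f hf h0
      obtain ⟨L, hL⟩ := hPne
      have h2 := (Finset.mem_filter.mp hf).2 L hL
      exact h2 (by rw [h0, LinearMap.ker_zero]; exact le_top)
    have hmap : ∀ f ∈ A, LinearMap.ker f ∈ Hs := by
      intro f hf
      rw [hHs, Finset.mem_filter]
      exact ⟨mem_univ _, hker1 f (hA0 f hf), (Finset.mem_filter.mp hf).2⟩
    rw [Finset.card_eq_sum_card_fiberwise hmap]
    have hfiber : ∀ H ∈ Hs, (A.filter (fun f => LinearMap.ker f = H)).card = q - 1 := by
      intro H hH
      have hH' := Finset.mem_filter.mp hH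
      have hHrank : Module.finrank F H = N - 1 := hH'.2.1
      have hHavoid : ∀ L ∈ P, ¬ L ≤ H := hH'.2.2
      have hHne : H ≠ ⊤ := by
        intro h
        rw [h, finrank_top, hdimV] at hHrank
        omega
      have hEq : A.filter (fun f => LinearMap.ker f = H)
          = (univ.filter
              (fun f : Module.Dual F (Fin N → F) => H ≤ LinearMap.ker f)).erase 0 := by
        ext f
        simp only [Finset.mem_filter, Finset.mem_erase, hA, mem_univ, true_and]
        constructor
        · rintro ⟨havoid, hker⟩
          refine ⟨?_, hker ▸ le_refl _⟩
          intro h0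
          rw [h0, LinearMap.ker_zero] at hker
          exact hHne hker.symm
        · rintro ⟨h0, hle⟩
          have hkf : LinearMap.ker f = H := by
            refine (Submodule.eq_of_le_of_finrank_eq hle ?_).symm
            rw [hker1 f h0, hHrank]
          exact ⟨fun L hL hLf => hHavoid L hL (hkf ▸ hLf), hkf⟩
      have h0mem : (0 : Module.Dual F (Fin N → F)) ∈
          univ.filter (fun f : Module.Dual F (Fin N → F) => H ≤ LinearMap.ker f) := by
        simp [LinearMap.ker_zero]
      rw [hEq, Finset.card_erase_of_mem h0mem, hcardW H, hHrank]
      have : N - (N-1) = 1 := by omega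
      rw [this, pow_one]
    rw [Finset.sum_congr rfl hfiber, Finset.sum_const, smul_eq_mul]
  -- identity
  have hid : ∑ k ∈ range (ℓ+1), (-1:ℤ)^k * (ℓ.choose k) * (q:ℤ)^(N - min k N)
      = ((q:ℤ) - 1) * ∑ j ∈ range N, (-1:ℤ)^j * ((ℓ-1).choose j) * (q:ℤ)^(N - 1 - j) := by
    have hsplit : ∑ k ∈ range (ℓ+1), (-1:ℤ)^k * (ℓ.choose k) * (q:ℤ)^(N - min k N)
        = ∑ k ∈ range N, (-1:ℤ)^k * (ℓ.choose k) * (q:ℤ)^(N-k)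
          + ∑ k ∈ Ico N (ℓ+1), (-1:ℤ)^k * (ℓ.choose k) := by
      rw [range_eq_Ico, ← Finset.sum_Ico_consecutive _ (Nat.zero_le N) (by omega : N ≤ ℓ+1),
        ← range_eq_Ico]
      congr 1
      · apply Finset.sum_congr rfl
        intro k hk
        rw [min_eq_left (le_of_lt (Finset.mem_range.mp hk))]
      · apply Finset.sum_congr rfl
        intro k hk
        rw [min_eq_right (Finset.mem_Ico.mp hk).1, Nat.sub_self, pow_zero, mul_one]
    have h0 : ∑ k ∈ range (ℓ+1), (-1:ℤ)^k * (ℓ.choose k) = 0 :=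
      Int.alternating_sum_range_choose_of_ne (by omega)
    rw [range_eq_Ico, ← Finset.sum_Ico_consecutive _ (Nat.zero_le N) (by omega : N ≤ ℓ+1),
      ← range_eq_Ico] at h0
    have htail : ∑ k ∈ Ico N (ℓ+1), (-1:ℤ)^k * (ℓ.choose k)
        = - ∑ k ∈ range N, (-1:ℤ)^k * (ℓ.choose k) := by linarith
    have hcomb : ∑ k ∈ range N, (-1:ℤ)^k * (ℓ.choose k) * (q:ℤ)^(N-k)
        - ∑ k ∈ range N, (-1:ℤ)^k * (ℓ.choose k)
        = ∑ k ∈ range N, (-1:ℤ)^k * (ℓ.choose k) * ((q:ℤ)^(N-k) - 1) := by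
      rw [← Finset.sum_sub_distrib]
      apply Finset.sum_congr rfl
      intros
      ring
    rw [hsplit, htail, ← sub_eq_add_neg, hcomb,
      mainid (q:ℤ) ℓ (by omega) N (by omega)]
  have hNc : (Nat.card {H : Submodule F (Fin N → F) //
      Module.finrank F H = N - 1 ∧ ∀ L ∈ P, ¬ L ≤ H} : ℤ) = (Hs.card : ℤ) := by
    rw [Nat.card_eq_fintype_card, Fintype.card_subtype]
  have hcast : (A.card : ℤ) = (Hs.card : ℤ) * ((q:ℤ) - 1) := by
    rw [hfib]; push_cast [Nat.cast_sub (by omega : 1 ≤ q)]; ring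
  have hfinal : (Hs.card : ℤ) * ((q:ℤ) - 1)
      = ((q:ℤ) - 1) * ∑ j ∈ range N, (-1:ℤ)^j * ((ℓ-1).choose j) * (q:ℤ)^(N - 1 - j) := by
    rw [← hcast, hIE, hgroup, hid]
  have hq1 : (q:ℤ) - 1 ≠ 0 := by
    have : (2:ℤ) ≤ (q:ℤ) := by exact_mod_cast hq2
    omega
  rw [hNc]
  have := mul_right_cancel₀ hq1 (hfinal.trans (mul_comm _ _))
  rw [this]
  apply Finset.sum_congr rfl
  intro j hj
  have : N - j - 1 = N - 1 - j := by omega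
  rw [this]
end

section
/- Let q be a prime power and n ≥ 2. Let s_q(n) denote the number of matrices M ∈ F_q^{n×n} such that no element of F_q is an eigenvalue of M (equivalently, det(λI − M) ≠ 0 for all λ ∈ F_q). Then the number of 2-dimensional F_q-linear subspaces C of F_q^{n×n} in which every nonzero matrix is invertible equals s_q(n) · |GL_n(q)| / ((q²−1)(q²−q)). -/
section Aux

variable {F : Type} [Field F] {n : ℕ}

private lemma isUnit_smul_mat {a : F} (ha : a ≠ 0)
    {A : Matrix (Fin n) (Fin n) F} (hA : IsUnit A) : IsUnit (a • A) := by
  rw [Matrix.isUnit_iff_isUnit_det] at hA ⊢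
  rw [Matrix.det_smul, isUnit_iff_ne_zero] at *
  exact mul_ne_zero (pow_ne_zero _ ha) hA

private lemma cond_iff (A M : Matrix (Fin n) (Fin n) F) (hA : IsUnit A) :
    (∀ a b : F, ¬(a = 0 ∧ b = 0) → IsUnit (a • A + b • (A * M)))
    ↔ ∀ lam : F, (lam • (1 : Matrix (Fin n) (Fin n) F) - M).det ≠ 0 := by
  constructor
  · intro h lam
    have h' := h lam (-1) (by simp)
    rw [show lam • A + (-1 : F) • (A * M) = A * (lam • 1 - M) by
      rw [Matrix.mul_sub, mul_smul_comm, mul_one, neg_smul, ← sub_eq_add_neg, one_smul]] at h'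
    have h2 := (Matrix.isUnit_iff_isUnit_det _).mp h'
    rw [Matrix.det_mul, isUnit_iff_ne_zero] at h2
    intro hc
    exact h2 (by rw [hc, mul_zero])
  · intro h a b hab
    rcases eq_or_ne b 0 with rfl | hb
    · have ha : a ≠ 0 := by tauto
      rw [zero_smul, add_zero]
      exact isUnit_smul_mat ha hA
    · have key : IsUnit ((-a/b) • (1 : Matrix (Fin n) (Fin n) F) - M) := by
        rw [Matrix.isUnit_iff_isUnit_det, isUnit_iff_ne_zero]; exact h _
      have e1 : A * ((-a/b) • (1 : Matrix (Fin n) (Fin n) F) - M) = (-a/b) • A - A * M := by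
        rw [Matrix.mul_sub, mul_smul_comm, mul_one]
      have e2 : a • A + b • (A * M) = (-b) • (A * ((-a/b) • (1 : Matrix (Fin n) (Fin n) F) - M)) := by
        rw [e1]
        match_scalars <;> field_simp
      rw [e2]
      exact isUnit_smul_mat (neg_ne_zero.mpr hb) (hA.mul key)

private lemma card_eq_fiber {X Y : Type*} [Finite X] [Finite Y] (f : X → Y) (k : ℕ)
    (h : ∀ y, Nat.card {x // f x = y} = k) : Nat.card X = Nat.card Y * k := by
  classical
  have := Fintype.ofFinite X
  have := Fintype.ofFinite Y
  have h' : ∀ y : Y, Fintype.card {x // f x = y} = k := fun y => by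
    rw [← Nat.card_eq_fintype_card]; exact h y
  rw [Nat.card_eq_fintype_card, Nat.card_eq_fintype_card,
    Fintype.card_congr (Equiv.sigmaFiberEquiv f).symm, Fintype.card_sigma]
  simp [h', Finset.sum_const, mul_comm]

variable (F n) in
/-- the type of "good pairs". -/
abbrev XT : Type :=
  {p : Matrix (Fin n) (Fin n) F × Matrix (Fin n) (Fin n) F //
    ∀ a b : F, ¬(a = 0 ∧ b = 0) → IsUnit (a • p.1 + b • p.2)}

private lemma XT_fst_isUnit (p : XT F n) : IsUnit p.1.1 := by
  have := p.2 1 0 (by simp)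
  simpa using this

private noncomputable def equivX :
    XT F n ≃ (GL (Fin n) F) × {M : Matrix (Fin n) (Fin n) F //
      ∀ lam : F, (lam • (1 : Matrix (Fin n) (Fin n) F) - M).det ≠ 0} where
  toFun p :=
    (⟨p.1.1, p.1.1⁻¹,
        Matrix.mul_nonsing_inv _ ((Matrix.isUnit_iff_isUnit_det _).mp (XT_fst_isUnit p)),
        Matrix.nonsing_inv_mul _ ((Matrix.isUnit_iff_isUnit_det _).mp (XT_fst_isUnit p))⟩,
     ⟨p.1.1⁻¹ * p.1.2, by
        have hA := XT_fst_isUnit p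
        refine (cond_iff p.1.1 _ hA).mp ?_
        rw [Matrix.mul_nonsing_inv_cancel_left _ _ ((Matrix.isUnit_iff_isUnit_det _).mp hA)]
        exact p.2⟩)
  invFun q := ⟨(q.1.1, q.1.1 * q.2.1), (cond_iff _ _ q.1.isUnit).mpr q.2.2⟩
  left_inv p := by
    have hA := (Matrix.isUnit_iff_isUnit_det _).mp (XT_fst_isUnit p)
    exact Subtype.ext (Prod.ext rfl (Matrix.mul_nonsing_inv_cancel_left _ _ hA))
  right_inv q := by
    refine Prod.ext (Units.ext rfl) (Subtype.ext ?_)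
    exact Matrix.nonsing_inv_mul_cancel_left _ _
      ((Matrix.isUnit_iff_isUnit_det _).mp q.1.isUnit)

variable [Fintype F]

private lemma li_of_XT (hn : 2 ≤ n) (p : XT F n) :
    LinearIndependent F ![p.1.1, p.1.2] := by
  have : NeZero n := ⟨by omega⟩
  rw [LinearIndependent.pair_iff]
  intro s t hst
  by_contra hc
  rw [not_and_or] at hc
  have := p.2 s t (by tauto)
  rw [hst] at this
  exact not_isUnit_zero this

variable (F n) in
private def spanX (p : XT F n) : Submodule F (Matrix (Fin n) (Fin n) F) :=
  Submodule.span F (Set.range ![p.1.1, p.1.2])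

variable (F n) in
private def fX (hn : 2 ≤ n) (p : XT F n) :
    {C : Submodule F (Matrix (Fin n) (Fin n) F) //
      Module.finrank F C = 2 ∧ ∀ M ∈ C, M ≠ 0 → IsUnit M} :=
  ⟨spanX F n p, by
    rw [spanX, finrank_span_eq_card (li_of_XT hn p)]
    simp, by
    intro M hM hM0
    rw [spanX, Submodule.mem_span_range_iff_exists_fun] at hM
    obtain ⟨c, hc⟩ := hM
    rw [Fin.sum_univ_two] at hc
    simp only [Matrix.cons_val_zero, Matrix.cons_val_one, Matrix.head_cons] at hc
    have : ¬(c 0 = 0 ∧ c 1 = 0) := by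
      rintro ⟨h0, h1⟩
      rw [h0, h1] at hc
      simp at hc
      exact hM0 hc.symm
    have := p.2 (c 0) (c 1) this
    rwa [hc] at this⟩

private noncomputable def fiberEquiv (hn : 2 ≤ n)
    (c : {C : Submodule F (Matrix (Fin n) (Fin n) F) //
      Module.finrank F C = 2 ∧ ∀ M ∈ C, M ≠ 0 → IsUnit M}) :
    {p : XT F n // fX F n hn p = c} ≃ {s : Fin 2 → c.1 // LinearIndependent F s} where
  toFun p := ⟨fun i => ⟨![p.1.1.1, p.1.1.2] i, by
      have : spanX F n p.1 = c.1 := congrArg Subtype.val p.2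
      rw [← this]
      exact Submodule.subset_span (Set.mem_range_self i)⟩, by
    rw [← LinearMap.linearIndependent_iff (c.1.subtype) (Submodule.ker_subtype _)]
    exact li_of_XT hn p.1⟩
  invFun s := ⟨⟨((s.1 0 : Matrix (Fin n) (Fin n) F), (s.1 1 : Matrix (Fin n) (Fin n) F)), by
      intro a b hab
      have hmem : a • (s.1 0 : Matrix (Fin n) (Fin n) F) + b • (s.1 1 : Matrix (Fin n) (Fin n) F)
          = ((a • s.1 0 + b • s.1 1 : c.1) : Matrix (Fin n) (Fin n) F) := by
        push_cast; ring
      have hne : (a • s.1 0 + b • s.1 1 : c.1) ≠ 0 := by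
        intro h0
        refine hab ?_
        have := Fintype.linearIndependent_iff.mp s.2 ![a, b] ?_ 
        · exact ⟨this 0, this 1⟩
        · rw [Fin.sum_univ_two]
          simpa using h0
      rw [hmem]
      refine c.2.2 _ (Submodule.coe_mem _) fun h => hne (ZeroMemClass.coe_eq_zero.mp h)⟩, by
    apply Subtype.ext
    show spanX F n _ = c.1
    have hfun : ![((s.1 0 : Matrix (Fin n) (Fin n) F)), ((s.1 1 : Matrix (Fin n) (Fin n) F))]
        = c.1.subtype ∘ s.1 := by
      funext i
      fin_cases i <;> rfl
    rw [spanX]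
    simp only [hfun]
    rw [Set.range_comp, ← Submodule.map_span]
    have : Submodule.span F (Set.range s.1) = ⊤ :=
      s.2.span_eq_top_of_card_eq_finrank (by simp [c.2.1])
    rw [this, Submodule.map_subtype_top]⟩
  left_inv p := by
    apply Subtype.ext
    apply Subtype.ext
    rfl
  right_inv s := Subtype.ext (funext fun i => Subtype.ext (by fin_cases i <;> rfl))

end Aux

/-- Let `s_q(n)` be the number of spectrum-free matrices in `F_q^{n×n}` (matrices `M` with
`det(λI − M) ≠ 0` for all `λ ∈ F_q`). Then the number of 2-dimensional subspaces of
`F_q^{n×n}` in which every nonzero matrix is invertible equals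
`s_q(n)·|GL_n(q)| / ((q²−1)(q²−q))`. -/
theorem stmt18 (q n : ℕ) (F : Type) [Field F] [Fintype F] (hq : Fintype.card F = q)
    (hn : 2 ≤ n) :
    (Nat.card {C : Submodule F (Matrix (Fin n) (Fin n) F) //
        Module.finrank F C = 2 ∧ ∀ M ∈ C, M ≠ 0 → IsUnit M} : ℚ) =
      (Nat.card {M : Matrix (Fin n) (Fin n) F //
          ∀ lam : F, (lam • (1 : Matrix (Fin n) (Fin n) F) - M).det ≠ 0} : ℚ) *
        (∏ i ∈ Finset.range n, ((q : ℚ) ^ n - q ^ i)) /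
        (((q : ℚ) ^ 2 - 1) * ((q : ℚ) ^ 2 - q)) := by
  classical
  have hq2 : 2 ≤ q := hq ▸ Fintype.one_lt_card
  -- counting via fibers
  have hfiber : ∀ c, Nat.card {p : XT F n // fX F n hn p = c}
      = (q ^ 2 - 1) * (q ^ 2 - q) := by
    intro c
    rw [Nat.card_congr (fiberEquiv hn c)]
    have hle : (2 : ℕ) ≤ Module.finrank F c.1 := by rw [c.2.1]
    rw [card_linearIndependent hle, c.2.1, Fin.prod_univ_two]
    simp [hq]
  have hX1 : Nat.card (XT F n) =
      Nat.card {C : Submodule F (Matrix (Fin n) (Fin n) F) //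
        Module.finrank F C = 2 ∧ ∀ M ∈ C, M ≠ 0 → IsUnit M} * ((q ^ 2 - 1) * (q ^ 2 - q)) :=
    card_eq_fiber (fX F n hn) _ hfiber
  have hX2 : Nat.card (XT F n) =
      Nat.card (GL (Fin n) F) * Nat.card {M : Matrix (Fin n) (Fin n) F //
        ∀ lam : F, (lam • (1 : Matrix (Fin n) (Fin n) F) - M).det ≠ 0} := by
    rw [Nat.card_congr equivX, Nat.card_prod]
  have hGL : Nat.card (GL (Fin n) F) = ∏ i ∈ Finset.range n, (q ^ n - q ^ i) := by
    rw [Matrix.card_GL_field, hq]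
    exact Fin.prod_univ_eq_prod_range (fun i => q ^ n - q ^ i) n
  -- nat equation
  have key : Nat.card {C : Submodule F (Matrix (Fin n) (Fin n) F) //
        Module.finrank F C = 2 ∧ ∀ M ∈ C, M ≠ 0 → IsUnit M} * ((q ^ 2 - 1) * (q ^ 2 - q))
      = Nat.card {M : Matrix (Fin n) (Fin n) F //
          ∀ lam : F, (lam • (1 : Matrix (Fin n) (Fin n) F) - M).det ≠ 0}
        * ∏ i ∈ Finset.range n, (q ^ n - q ^ i) := by
    rw [← hX1, hX2, hGL, mul_comm]
  -- casts
  have hqQ : (2 : ℚ) ≤ (q : ℚ) := by exact_mod_cast hq2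
  have hD : (((q : ℚ) ^ 2 - 1) * ((q : ℚ) ^ 2 - q)) = ((q ^ 2 - 1) * (q ^ 2 - q) : ℕ) := by
    have h1 : (1 : ℕ) ≤ q ^ 2 := Nat.one_le_pow _ _ (by omega)
    have h2 : q ≤ q ^ 2 := by nlinarith
    push_cast [Nat.cast_sub h1, Nat.cast_sub h2]
    ring
  have hP : (∏ i ∈ Finset.range n, ((q : ℚ) ^ n - q ^ i))
      = ((∏ i ∈ Finset.range n, (q ^ n - q ^ i) : ℕ) : ℚ) := by
    rw [Nat.cast_prod]
    refine Finset.prod_congr rfl fun i hi => ?_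
    have : q ^ i ≤ q ^ n := Nat.pow_le_pow_right (by omega)
      (le_of_lt (Finset.mem_range.mp hi))
    push_cast [Nat.cast_sub this]
    ring
  have hDne : (((q : ℚ) ^ 2 - 1) * ((q : ℚ) ^ 2 - q)) ≠ 0 := by
    have h1 : (0 : ℚ) < (q : ℚ) ^ 2 - 1 := by nlinarith
    have h2 : (0 : ℚ) < (q : ℚ) ^ 2 - q := by nlinarith
    positivity
  rw [eq_div_iff hDne, hD, hP]
  exact_mod_cast key
end

section
/- Let q be a prime power and 1 ≤ r ≤ n be integers. Let A be the number of n-dimensional F_q-linear subspaces C of F_q^{r×n} such that every nonzero matrix in C has rank r, and let B be the number of r-dimensional F_q-linear subspaces D of F_q^{n×n} such that every nonzero matrix in D is invertible. Then A · |GL_n(q)| = B · |GL_r(q)|. Equivalently, A/[rn choose n]_q divided by B/[n² choose r]_q equals (|GL_r(q)|/|GL_n(q)|) · ([n² choose r]_q/[rn choose n]_q). -/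
/-!
A linear map `φ : F^n → F^{r×n}` is a tensor in `F^n ⊗ F^r ⊗ F^n`, and "every nonzero `φ x` has
rank `r`" says `u ᵥ* φ x ≠ 0` for all nonzero `x ∈ F^n`, `u ∈ F^r`. Read as a map
`ψ : F^r → F^{n×n}`, with `x ᵥ* ψ u = u ᵥ* φ x`, the same condition says that every nonzero `ψ u`
is invertible. So both sides count the same tensors: such maps are injective, and grouping them
by their image, every admissible subspace of dimension `k` is the image of exactly `|GL_k(q)|`
of them.
-/

open Matrix Module Function

theorem LinearMap.forall_ne_zero_map_iff {R M N : Type*} [Ring R] [AddCommGroup M] [Module R M]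
    [AddCommGroup N] [Module R N] {φ : M →ₗ[R] N} {Q : N → Prop} (hQ : ¬ Q 0) :
    (∀ x, x ≠ 0 → Q (φ x)) ↔ Injective φ ∧ ∀ w ∈ LinearMap.range φ, w ≠ 0 → Q w := by
  refine ⟨fun h => ⟨?_, ?_⟩, fun ⟨hinj, hrange⟩ x hx => ?_⟩
  · refine (injective_iff_map_eq_zero φ).mpr fun x hx => ?_
    by_contra hx0
    exact hQ (hx ▸ h x hx0)
  · rintro _ ⟨x, rfl⟩ hw
    exact h x fun hx => hw (by rw [hx, map_zero])
  · exact hrange _ ⟨x, rfl⟩ ((map_ne_zero_iff φ hinj).mpr hx)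

section Counting

variable {F V W : Type*} [Field F] [AddCommGroup V] [Module F V] [AddCommGroup W] [Module F W]

noncomputable def LinearMap.injectiveWithRangeEquiv (S : Submodule F W) :
    {φ : V →ₗ[F] W // Injective φ ∧ LinearMap.range φ = S} ≃ (V ≃ₗ[F] S) where
  toFun φ := (LinearEquiv.ofInjective φ.1 φ.2.1).trans (LinearEquiv.ofEq _ _ φ.2.2)
  invFun e := ⟨S.subtype ∘ₗ e, S.injective_subtype.comp e.injective, by
    rw [LinearMap.range_comp, LinearEquiv.range, Submodule.map_top, Submodule.range_subtype]⟩
  left_inv φ := by ext; simp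
  right_inv e := by ext; simp

theorem card_linearEquiv_eq_card_GL {S : Type*} [AddCommGroup S] [Module F S]
    [FiniteDimensional F V] [FiniteDimensional F S] {m : ℕ} (hV : finrank F V = m)
    (hS : finrank F S = m) : Nat.card (V ≃ₗ[F] S) = Nat.card (GL (Fin m) F) := by
  let f : S ≃ₗ[F] V := LinearEquiv.ofFinrankEq S V (hS.trans hV.symm)
  let b : Basis (Fin m) F V := finBasisOfFinrankEq F V hV
  rw [Nat.card_congr (Matrix.GeneralLinearGroup.toLin' b).toEquiv,
    Nat.card_congr (LinearMap.GeneralLinearGroup.generalLinearEquiv F V).toEquiv]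
  exact Nat.card_congr
    { toFun := fun e => e.trans f
      invFun := fun e => e.trans f.symm
      left_inv := fun e => by ext; simp
      right_inv := fun e => by ext; simp }

theorem card_injective_linearMap_range (P : Submodule F W → Prop) [Finite V] [Finite W]
    {m : ℕ} (hV : finrank F V = m) :
    Nat.card {φ : V →ₗ[F] W // Injective φ ∧ P (LinearMap.range φ)} =
      Nat.card {S : Submodule F W // finrank F S = m ∧ P S} * Nat.card (GL (Fin m) F) := by
  have : Finite (V →ₗ[F] W) := .of_injective _ DFunLike.coe_injective
  have : Fintype {S : Submodule F W // finrank F S = m ∧ P S} := .ofFinite _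
  let byRange : {φ : V →ₗ[F] W // Injective φ ∧ P (LinearMap.range φ)} ≃
      Σ S : {S : Submodule F W // finrank F S = m ∧ P S},
        {φ : V →ₗ[F] W // Injective φ ∧ LinearMap.range φ = S.1} :=
    { toFun := fun φ => ⟨⟨_, (LinearMap.finrank_range_of_inj φ.2.1).trans hV, φ.2.2⟩,
        φ.1, φ.2.1, rfl⟩
      invFun := fun p => ⟨p.2.1, p.2.2.1, by rw [p.2.2.2]; exact p.1.2.2⟩
      left_inv := fun _ => rfl
      right_inv := fun p => Sigma.subtype_ext (Subtype.ext p.2.2.2) rfl }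
  rw [Nat.card_congr byRange, Nat.card_sigma, Finset.sum_congr rfl fun S _ => by
    rw [Nat.card_congr (LinearMap.injectiveWithRangeEquiv S.1),
      card_linearEquiv_eq_card_GL hV S.2.1]]
  simp [Nat.card_eq_fintype_card]

theorem card_linearMap_forall_ne_zero (Q : W → Prop) (hQ : ¬ Q 0) [Finite V] [Finite W]
    {m : ℕ} (hV : finrank F V = m) :
    Nat.card {φ : V →ₗ[F] W // ∀ x, x ≠ 0 → Q (φ x)} =
      Nat.card {S : Submodule F W // finrank F S = m ∧ ∀ w ∈ S, w ≠ 0 → Q w} *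
        Nat.card (GL (Fin m) F) := by
  rw [← card_injective_linearMap_range _ hV]
  exact Nat.card_congr (Equiv.subtypeEquivRight fun φ => φ.forall_ne_zero_map_iff hQ)

theorem card_GL_fin_eq_prod_range [Fintype F] (m : ℕ) :
    Nat.card (GL (Fin m) F) =
      ∏ i ∈ Finset.range m, (Fintype.card F ^ m - Fintype.card F ^ i) := by
  rw [Matrix.card_GL_field, Fin.prod_univ_eq_prod_range (fun i => _ ^ m - _ ^ i)]

end Counting

namespace Matrix

section Flip

variable {R : Type*} [CommRing R] {l m n : Type*} [Fintype l] [DecidableEq l] [Fintype m]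

theorem vecMul_injective_iff_forall_ne_zero (M : Matrix m n R) :
    Injective M.vecMul ↔ ∀ u, u ≠ 0 → u ᵥ* M ≠ 0 := by
  rw [← coe_vecMulLinear, injective_iff_map_eq_zero]
  exact forall_congr' fun u => by rw [coe_vecMulLinear, not_imp_not]

def flipFamily (φ : (l → R) →ₗ[R] Matrix m n R) : (m → R) →ₗ[R] Matrix l n R where
  toFun u := Matrix.of fun i => u ᵥ* φ (Pi.single i 1)
  map_add' u v := by ext; simp [add_vecMul]
  map_smul' t u := by ext; simp [smul_vecMul]

theorem vecMul_flipFamily (φ : (l → R) →ₗ[R] Matrix m n R) (x : l → R) (u : m → R) :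
    x ᵥ* flipFamily φ u = u ᵥ* φ x := by
  have hx : ∑ i, x i • Pi.single i 1 = x := by
    simpa using (Pi.basisFun R l).sum_repr x
  conv_rhs => rw [← hx, map_sum, vecMul_sum]
  simp only [map_smul, vecMul_smul, vecMul_eq_sum x]
  rfl

theorem flipFamily_flipFamily [DecidableEq m] (φ : (l → R) →ₗ[R] Matrix m n R) :
    flipFamily (flipFamily φ) = φ := by
  ext x k j
  simp [flipFamily]

theorem forall_vecMul_flipFamily_injective_iff (φ : (l → R) →ₗ[R] Matrix m n R) :
    (∀ u, u ≠ 0 → Injective (flipFamily φ u).vecMul) ↔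
      ∀ x, x ≠ 0 → Injective (φ x).vecMul := by
  simp only [vecMul_injective_iff_forall_ne_zero]
  simp only [vecMul_flipFamily]
  exact ⟨fun h x hx u hu => h u hu x hx, fun h u hu x hx => h x hx u hu⟩

def flipFamilyEquiv [DecidableEq m] :
    {φ : (l → R) →ₗ[R] Matrix m n R // ∀ x, x ≠ 0 → Injective (φ x).vecMul} ≃
      {ψ : (m → R) →ₗ[R] Matrix l n R // ∀ u, u ≠ 0 → Injective (ψ u).vecMul} where
  toFun φ := ⟨flipFamily φ.1, (forall_vecMul_flipFamily_injective_iff φ.1).mpr φ.2⟩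
  invFun ψ := ⟨flipFamily ψ.1, (forall_vecMul_flipFamily_injective_iff (flipFamily ψ.1)).mp
    (by rw [flipFamily_flipFamily]; exact ψ.2)⟩
  left_inv φ := Subtype.ext (flipFamily_flipFamily φ.1)
  right_inv ψ := Subtype.ext (flipFamily_flipFamily ψ.1)

end Flip

theorem rank_eq_card_iff_vecMul_injective {K m n : Type*} [Field K] [Fintype m] [Fintype n]
    (M : Matrix m n K) : M.rank = Fintype.card m ↔ Injective M.vecMul := by
  rw [vecMul_injective_iff, linearIndependent_iff_card_eq_finrank_span, Set.finrank,
    rank_eq_finrank_span_row, eq_comm]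

end Matrix

/-- Let `A` be the number of `n`-dimensional subspaces of `F_q^{r×n}` in which every
nonzero matrix has rank `r`, and `B` the number of `r`-dimensional subspaces of
`F_q^{n×n}` in which every nonzero matrix is invertible. Then
`A·|GL_n(q)| = B·|GL_r(q)|`. -/
theorem stmt19 (q r n : ℕ) (F : Type) [Field F] [Fintype F] (hq : Fintype.card F = q)
    (hr1 : 1 ≤ r) (hrn : r ≤ n) :
    Nat.card {C : Submodule F (Matrix (Fin r) (Fin n) F) //
        Module.finrank F C = n ∧ ∀ M ∈ C, M ≠ 0 → M.rank = r} *
        (∏ i ∈ Finset.range n, (q ^ n - q ^ i)) =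
      Nat.card {D : Submodule F (Matrix (Fin n) (Fin n) F) //
          Module.finrank F D = r ∧ ∀ M ∈ D, M ≠ 0 → IsUnit M} *
        (∏ i ∈ Finset.range r, (q ^ r - q ^ i)) := by
  subst hq
  have hRank : ¬ (0 : Matrix (Fin r) (Fin n) F).rank = r := by
    rw [rank_zero]
    omega
  have : Nonempty (Fin n) := ⟨⟨0, by omega⟩⟩
  rw [← card_GL_fin_eq_prod_range, ← card_GL_fin_eq_prod_range,
    ← card_linearMap_forall_ne_zero _ hRank (finrank_fin_fun F),
    ← card_linearMap_forall_ne_zero _ not_isUnit_zero (finrank_fin_fun F)]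
  refine Nat.card_congr <| (Equiv.subtypeEquivRight fun φ => ?_).trans <|
    flipFamilyEquiv.trans (Equiv.subtypeEquivRight fun ψ => ?_)
  · simp only [← rank_eq_card_iff_vecMul_injective, Fintype.card_fin]
  · simp only [vecMul_injective_iff_isUnit]
end
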